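/- arXiv:1206.5675 — 2 statements merged into one kernel-verified Lean document; each statement's English description precedes it below -/
import Mathlib

section
/- Let p be an odd prime and V the ring of integers of a finite extension of Q_p. Then V contains a primitive p-th root of unity if and only if V contains a root of x^{p-1} + p, i.e. a (p-1)-th root of -p. -/
/-!
Write `(1 + x) ^ p = 1 + p x Q(x) + x ^ p` with `Q ∈ ℤ[X]`, `Q(0) = 1`.
If `ζ ^ p = 1 ≠ ζ`, then `π = ζ - 1` satisfies `π ^ (p - 1) = -p Q(π)` with `Q(π) ≡ 1` modulo
the maximal ideal, so Hensel's lemma gives `y` with `y ^ (p - 1) = Q(π)`, and `ξ = π / y`.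
Conversely, if `ξ ^ (p - 1) = -p`, then `(1 + ξ t) ^ p = 1 + p ξ t (Q(ξ t) - t ^ (p - 1))`, and
Hensel's lemma gives `t ≡ 1` with `t ^ (p - 1) = Q(ξ t)`, so `ζ = 1 + ξ t`. Both equations are
perturbations of `t ^ (p - 1) = 1`, whose root `1` is simple because `p - 1` is a unit.
-/

open Polynomial IsUltrametricDist

lemma IsUltrametricDist.norm_eq_of_norm_sub_lt {S : Type*} [SeminormedAddGroup S]
    [IsUltrametricDist S] {x y : S} (h : ‖x - y‖ < ‖y‖) : ‖x‖ = ‖y‖ := by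
  simpa [max_eq_right h.le] using norm_add_eq_max_of_norm_ne_norm h.ne

section NormedField

variable {K : Type*} [NormedField K]

lemma norm_eq_one_of_pow_eq_one {ζ : K} {n : ℕ} (h : ζ ^ n = 1) (hn : n ≠ 0) : ‖ζ‖ = 1 :=
  (pow_left_inj₀ (norm_nonneg _) zero_le_one hn).1 (by rw [← norm_pow, h, norm_one, one_pow])

lemma norm_natCast_pred_eq_one [IsUltrametricDist K] {n : ℕ} (hn : 0 < n)
    (h : ‖(n : K)‖ < 1) : ‖((n - 1 : ℕ) : K)‖ = 1 := by
  rw [Nat.cast_pred hn]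
  calc ‖(n : K) - 1‖ = ‖(-1 : K)‖ := norm_eq_of_norm_sub_lt (by simpa using h)
    _ = 1 := by simp

end NormedField

namespace Polynomial

section BinomialQuotient

variable (R : Type*) [CommRing R] (p : ℕ)

/-- `((1 + X) ^ p - 1 - X ^ p) / (p X)` for `p` prime; the `ℕ`-divisions `p.choose (k + 1) / p`
are then exact. -/
noncomputable def binomialQuotient : R[X] :=
  ∑ k ∈ Finset.range (p - 1), C ((p.choose (k + 1) / p : ℕ) : R) * X ^ k

variable {R p}

lemma coeff_binomialQuotient (n : ℕ) :
    (binomialQuotient R p).coeff n =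
      if n < p - 1 then ((p.choose (n + 1) / p : ℕ) : R) else 0 := by
  simp [binomialQuotient, coeff_X_pow]

lemma coeff_zero_binomialQuotient (hp : p.Prime) : (binomialQuotient R p).coeff 0 = 1 := by
  simp [coeff_binomialQuotient, hp.one_lt, Nat.div_self hp.pos]

lemma one_add_pow_eq_of_prime (hp : p.Prime) (x : R) :
    (1 + x) ^ p = 1 + p * x * (binomialQuotient R p).eval x + x ^ p := by
  obtain ⟨q, rfl⟩ : ∃ q, p = q + 1 := ⟨p - 1, (Nat.sub_add_cancel hp.one_le).symm⟩
  rw [add_comm 1 x, add_pow, Finset.sum_range_succ, Finset.sum_range_succ']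
  simp only [binomialQuotient, eval_finsetSum, eval_mul, eval_C, eval_pow, eval_X, Finset.mul_sum,
    add_tsub_cancel_right]
  rw [Finset.sum_congr rfl fun k hk => ?_]
  · simp only [pow_zero, one_pow, mul_one, Nat.choose_zero_right, Nat.cast_one, Nat.choose_self]
    ring
  have e : ((q + 1).choose (k + 1) : R) =
      (((q + 1).choose (k + 1) / (q + 1) : ℕ) : R) * ((q + 1 : ℕ) : R) := by
    rw [← Nat.cast_mul, Nat.div_mul_cancel
      (hp.dvd_choose_self k.succ_ne_zero (by simpa using Finset.mem_range.1 hk))]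
  push_cast at e ⊢
  linear_combination x ^ (k + 1) * e

end BinomialQuotient

lemma newtonMap_eq_sub_div {F : Type*} [Field F] (f : F[X]) (x : F) :
    f.newtonMap x = x - f.eval x / f.derivative.eval x := by
  rw [newtonMap_apply, Ring.inverse_eq_inv', coe_aeval_eq_eval, inv_mul_eq_div]

variable {K : Type*} [NormedField K] {f : K[X]}

lemma norm_newtonMap_sub_self {x : K} (hd : ‖f.derivative.eval x‖ = 1) :
    ‖f.newtonMap x - x‖ = ‖f.eval x‖ := by
  rw [newtonMap_eq_sub_div, sub_sub_cancel_left, norm_neg, norm_div, hd, div_one]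

lemma norm_coeff_comp_C_mul_X_sub_one_le (hf : ∀ n, ‖f.coeff n‖ ≤ 1) (hf0 : f.coeff 0 = 1)
    {x : K} (hx : ‖x‖ ≤ 1) (n : ℕ) : ‖(f.comp (C x * X) - 1).coeff n‖ ≤ ‖x‖ := by
  rw [coeff_sub, comp_C_mul_X_coeff, coeff_one]
  rcases n.eq_zero_or_pos with rfl | hn
  · simp [hf0]
  · rw [if_neg hn.ne', sub_zero, norm_mul, norm_pow]
    exact (mul_le_of_le_one_left (by positivity) (hf n)).trans
      (pow_le_of_le_one (norm_nonneg _) hx hn.ne')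

variable [IsUltrametricDist K]

lemma norm_eval_le_of_forall_norm_coeff_le {a : K} {r : ℝ} (ha : ‖a‖ ≤ 1)
    (hr : 0 ≤ r) (hf : ∀ n, ‖f.coeff n‖ ≤ r) : ‖f.eval a‖ ≤ r := by
  rw [eval_eq_sum_range]
  refine norm_sum_le_of_forall_le_of_nonneg hr fun n _ => ?_
  rw [norm_mul, norm_pow]
  exact (mul_le_of_le_one_right (norm_nonneg _) (pow_le_one₀ (norm_nonneg a) ha)).trans (hf n)

lemma norm_coeff_derivative_le {r : ℝ} (hf : ∀ n, ‖f.coeff n‖ ≤ r) (n : ℕ) :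
    ‖f.derivative.coeff n‖ ≤ r := by
  rw [coeff_derivative, norm_mul]
  exact (mul_le_of_le_one_right (norm_nonneg _)
    (by exact_mod_cast norm_natCast_le_one K (n + 1))).trans (hf _)

lemma norm_coeff_binomialQuotient_le (p n : ℕ) : ‖(binomialQuotient K p).coeff n‖ ≤ 1 := by
  rw [coeff_binomialQuotient]
  split_ifs
  · exact norm_natCast_le_one K _
  · simp

lemma mem_integer_valuation_iff {x : K} :
    x ∈ (NormedField.valuation (K := K)).integer ↔ ‖x‖ ≤ 1 := by
  simp [Valuation.mem_integer_iff, ← NNReal.coe_le_coe]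

section UnitBall

variable (hf : ∀ n, ‖f.coeff n‖ ≤ 1)
include hf

lemma exists_eval_add_eq {x h : K} (hx : ‖x‖ ≤ 1) (hh : ‖h‖ ≤ 1) :
    ∃ k : K, ‖k‖ ≤ 1 ∧ f.eval (x + h) = f.eval x + f.derivative.eval x * h + k * h ^ 2 := by
  -- the remainder of `binomExpansion` over the valuation ring has norm at most `1`
  set O := (NormedField.valuation (K := K)).integer
  obtain ⟨F, rfl⟩ : f ∈ lifts (algebraMap O K) := (lifts_iff_coeff_lifts f).2 fun n =>
    ⟨⟨_, mem_integer_valuation_iff.2 (hf n)⟩, rfl⟩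
  obtain ⟨k, hk⟩ := F.binomExpansion ⟨x, mem_integer_valuation_iff.2 hx⟩
    ⟨h, mem_integer_valuation_iff.2 hh⟩
  refine ⟨k, mem_integer_valuation_iff.1 k.2, ?_⟩
  have hev : ∀ (G : O[X]) (y : O), (G.map (algebraMap O K)).eval (y : K) = G.eval y :=
    fun G y => by rw [eval_map]; exact eval₂_at_apply (algebraMap O K) y
  rw [coe_mapRingHom, derivative_map]
  simpa only [← hev, Subring.coe_add, Subring.coe_mul, Subring.coe_pow] using
    congrArg Subtype.val hk

lemma norm_eval_sub_eval_le {x y : K} (hx : ‖x‖ ≤ 1) (hy : ‖y‖ ≤ 1) :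
    ‖f.eval y - f.eval x‖ ≤ ‖y - x‖ := by
  have hyx : ‖y - x‖ ≤ 1 := by
    simpa [sub_eq_add_neg] using (norm_add_le_max y (-x)).trans (by simpa using max_le hy hx)
  obtain ⟨k, hk, hfy⟩ := exists_eval_add_eq hf hx hyx
  have hd : ‖f.derivative.eval x‖ ≤ 1 :=
    norm_eval_le_of_forall_norm_coeff_le hx zero_le_one (norm_coeff_derivative_le hf)
  have hkh : ‖k * (y - x)‖ ≤ 1 := by rw [norm_mul]; exact mul_le_one₀ hk (norm_nonneg _) hyx
  rw [add_sub_cancel] at hfy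
  calc ‖f.eval y - f.eval x‖ = ‖(f.derivative.eval x + k * (y - x)) * (y - x)‖ := by
        rw [hfy]; ring_nf
    _ ≤ ‖y - x‖ := by
        rw [norm_mul]
        exact mul_le_of_le_one_left (norm_nonneg _) ((norm_add_le_max _ _).trans (max_le hd hkh))

variable {x : K} (hx : ‖x‖ ≤ 1) (hd : ‖f.derivative.eval x‖ = 1)
include hx hd

lemma norm_eval_newtonMap_le (hfx : ‖f.eval x‖ ≤ 1) :
    ‖f.eval (f.newtonMap x)‖ ≤ ‖f.eval x‖ ^ 2 := by
  set h := f.newtonMap x - x with h_def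
  have hh : ‖h‖ = ‖f.eval x‖ := norm_newtonMap_sub_self hd
  obtain ⟨k, hk, hfxh⟩ := exists_eval_add_eq hf hx (hh.trans_le hfx)
  have hd0 : f.derivative.eval x ≠ 0 := norm_ne_zero_iff.1 (by rw [hd]; exact one_ne_zero)
  have hlin : f.derivative.eval x * h = -f.eval x := by
    rw [h_def, newtonMap_eq_sub_div, sub_sub_cancel_left, mul_neg, mul_div_cancel₀ _ hd0]
  rw [add_sub_cancel, hlin, add_neg_cancel, zero_add] at hfxh
  rw [hfxh, norm_mul, norm_pow, hh]
  exact mul_le_of_le_one_left (by positivity) hk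

lemma norm_derivative_eval_newtonMap (hfx : ‖f.eval x‖ < 1) :
    ‖f.derivative.eval (f.newtonMap x)‖ = 1 := by
  have hy : ‖f.newtonMap x‖ ≤ 1 := by
    rw [← sub_add_cancel (f.newtonMap x) x]
    exact (norm_add_le_max _ _).trans (max_le ((norm_newtonMap_sub_self hd).trans_le hfx.le) hx)
  rw [← hd]
  refine norm_eq_of_norm_sub_lt ?_
  calc _ ≤ ‖f.newtonMap x - x‖ := norm_eval_sub_eval_le (norm_coeff_derivative_le hf) hx hy
    _ < _ := by rw [norm_newtonMap_sub_self hd, hd]; exact hfx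

end UnitBall

section Hensel

variable {a : K} (hf : ∀ n, ‖f.coeff n‖ ≤ 1) (ha : ‖a‖ ≤ 1) (hfa : ‖f.eval a‖ < 1)
  (hd : ‖f.derivative.eval a‖ = 1)
include hf ha hfa hd

lemma newtonMap_iterate_estimates (n : ℕ) :
    ‖f.newtonMap^[n] a - a‖ ≤ ‖f.eval a‖ ∧ ‖f.derivative.eval (f.newtonMap^[n] a)‖ = 1 ∧
      ‖f.eval (f.newtonMap^[n] a)‖ ≤ ‖f.eval a‖ ^ (n + 1) := by
  set T := ‖f.eval a‖
  induction n with
  | zero => simpa [T] using hd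
  | succ n ih =>
    obtain ⟨hxa, hdx, hfx⟩ := ih
    set x := f.newtonMap^[n] a
    have hx : ‖x‖ ≤ 1 := by
      rw [← sub_add_cancel x a]
      exact (norm_add_le_max _ _).trans (max_le (hxa.trans hfa.le) ha)
    have hfxT : ‖f.eval x‖ ≤ T :=
      hfx.trans (pow_le_of_le_one (norm_nonneg _) hfa.le n.succ_ne_zero)
    rw [Function.iterate_succ_apply']
    refine ⟨?_, norm_derivative_eval_newtonMap hf hx hdx (hfxT.trans_lt hfa), ?_⟩
    · rw [← sub_add_sub_cancel _ x a]
      exact (norm_add_le_max _ _).trans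
        (max_le ((norm_newtonMap_sub_self hdx).trans_le hfxT) hxa)
    · calc ‖f.eval (f.newtonMap x)‖ ≤ ‖f.eval x‖ ^ 2 :=
            norm_eval_newtonMap_le hf hx hdx (hfxT.trans hfa.le)
        _ ≤ (T ^ (n + 1)) ^ 2 := by gcongr
        _ ≤ T ^ (n + 1 + 1) := by
            rw [← pow_mul]
            exact pow_le_pow_of_le_one (norm_nonneg _) hfa.le (by omega)

theorem exists_isRoot_norm_sub_le [CompleteSpace K] :
    ∃ b, f.IsRoot b ∧ ‖b - a‖ ≤ ‖f.eval a‖ := by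
  set T := ‖f.eval a‖
  have est := newtonMap_iterate_estimates hf ha hfa hd
  have hdist (n : ℕ) : dist (f.newtonMap^[n] a) (f.newtonMap^[n + 1] a) ≤ T * T ^ n := by
    rw [dist_comm, dist_eq_norm, Function.iterate_succ_apply',
      norm_newtonMap_sub_self (est n).2.1, ← pow_succ']
    exact (est n).2.2
  obtain ⟨b, hb⟩ := cauchySeq_tendsto_of_complete (cauchySeq_of_le_geometric T T hfa hdist)
  have hfb : Filter.Tendsto (fun n => f.eval (f.newtonMap^[n] a)) Filter.atTop (nhds 0) := by
    refine squeeze_zero_norm (fun n => (est n).2.2) ?_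
    simpa [pow_succ] using (tendsto_pow_atTop_nhds_zero_of_lt_one (norm_nonneg _) hfa).mul_const T
  exact ⟨b, tendsto_nhds_unique ((f.continuous.tendsto b).comp hb) hfb,
    le_of_tendsto (hb.sub_const a).norm (Filter.Eventually.of_forall fun n => (est n).1)⟩

end Hensel

theorem exists_isRoot_X_pow_sub_one_add [CompleteSpace K] {n : ℕ} (hn : ‖(n : K)‖ = 1)
    {h : K[X]} {r : ℝ} (hr : r < 1) (hh : ∀ k, ‖h.coeff k‖ ≤ r) :
    ∃ y, (X ^ n - 1 + h).IsRoot y ∧ ‖y - 1‖ < 1 := by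
  have hr0 : 0 ≤ r := (norm_nonneg _).trans (hh 0)
  have hg : ∀ k, ‖(X ^ n - 1 + h : K[X]).coeff k‖ ≤ 1 := fun k => by
    rw [coeff_add]
    refine (norm_add_le_max _ _).trans (max_le ?_ ((hh k).trans hr.le))
    rw [coeff_sub, coeff_X_pow, coeff_one]
    split_ifs <;> simp
  have hg1 : ‖(X ^ n - 1 + h : K[X]).eval 1‖ < 1 := by
    simpa using (norm_eval_le_of_forall_norm_coeff_le norm_one.le hr0 hh).trans_lt hr
  have hd1 : ‖(X ^ n - 1 + h : K[X]).derivative.eval 1‖ = 1 := by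
    rw [← hn]
    refine norm_eq_of_norm_sub_lt ?_
    simpa [derivative_X_pow] using (norm_eval_le_of_forall_norm_coeff_le norm_one.le hr0
      (norm_coeff_derivative_le hh)).trans_lt (hr.trans_eq hn.symm)
  obtain ⟨y, hy, hy1⟩ := exists_isRoot_norm_sub_le hg norm_one.le hg1 hd1
  exact ⟨y, hy, hy1.trans_lt hg1⟩

end Polynomial

section PrimeRoots

variable {K : Type*} [NormedField K]

variable [IsUltrametricDist K] [CompleteSpace K] {p : ℕ} (hp : p.Prime) (hpK : ‖(p : K)‖ < 1)
include hp hpK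

theorem exists_pow_pred_eq_neg_of_pow_eq_one {ζ : K} (hζ : ζ ^ p = 1) (hζ1 : ζ ≠ 1) :
    ∃ ξ : K, ‖ξ‖ < 1 ∧ ξ ^ (p - 1) = -p := by
  set π := ζ - 1
  have hπ0 : π ≠ 0 := sub_ne_zero.2 hζ1
  have hπ : ‖π‖ ≤ 1 := by
    simpa [π, sub_eq_add_neg, norm_eq_one_of_pow_eq_one hζ hp.ne_zero] using
      norm_add_le_max ζ (-1)
  set Q := (binomialQuotient K p).eval π
  have hπQ : π ^ (p - 1) = -p * Q := by
    have h := one_add_pow_eq_of_prime hp π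
    rw [add_sub_cancel, hζ] at h
    apply mul_left_cancel₀ hπ0
    rw [← pow_succ', Nat.sub_add_cancel hp.one_le]
    linear_combination -h
  have hQ : ‖Q - 1‖ ≤ ‖π‖ := by
    simpa [Q, eval_comp] using norm_eval_le_of_forall_norm_coeff_le norm_one.le (norm_nonneg _)
      (norm_coeff_comp_C_mul_X_sub_one_le (norm_coeff_binomialQuotient_le p)
        (coeff_zero_binomialQuotient hp) hπ)
  have hπ1 : ‖π‖ < 1 := by
    refine (pow_lt_one_iff_of_nonneg (norm_nonneg _) (Nat.sub_ne_zero_of_lt hp.one_lt)).1 ?_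
    rw [← norm_pow, hπQ, norm_mul, norm_neg]
    exact (mul_le_of_le_one_right (norm_nonneg _) (norm_eval_le_of_forall_norm_coeff_le hπ
      zero_le_one (norm_coeff_binomialQuotient_le p))).trans_lt hpK
  obtain ⟨y, hy, hy1⟩ := exists_isRoot_X_pow_sub_one_add (norm_natCast_pred_eq_one hp.pos hpK)
    (h := C (1 - Q)) (r := ‖1 - Q‖) (by rw [norm_sub_rev]; exact hQ.trans_lt hπ1)
    (fun k => by rw [coeff_C]; split_ifs <;> simp)
  have hyQ : y ^ (p - 1) = Q := by simpa [sub_add_sub_cancel', sub_eq_zero] using hy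
  have hyn : ‖y‖ = 1 := by
    simpa using norm_eq_of_norm_sub_lt (y := (1 : K)) (by simpa using hy1)
  have hy0 : y ≠ 0 := norm_ne_zero_iff.1 (by rw [hyn]; exact one_ne_zero)
  refine ⟨π / y, by rwa [norm_div, hyn, div_one], ?_⟩
  rw [div_pow, hπQ, hyQ, mul_div_cancel_right₀ _ (hyQ ▸ pow_ne_zero _ hy0)]

theorem exists_pow_eq_one_of_pow_pred_eq_neg (hpK0 : (p : K) ≠ 0) {ξ : K}
    (hξ : ξ ^ (p - 1) = -p) : ∃ ζ : K, ζ ^ p = 1 ∧ ζ ≠ 1 := by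
  have hp1 : p - 1 ≠ 0 := Nat.sub_ne_zero_of_lt hp.one_lt
  have hξ1 : ‖ξ‖ < 1 :=
    (pow_lt_one_iff_of_nonneg (norm_nonneg _) hp1).1 (by rwa [← norm_pow, hξ, norm_neg])
  have hξ0 : ξ ≠ 0 := by
    rintro rfl
    exact hpK0 (by simpa [hp1] using hξ)
  obtain ⟨t, ht, ht1⟩ := exists_isRoot_X_pow_sub_one_add (norm_natCast_pred_eq_one hp.pos hpK)
    (h := -((binomialQuotient K p).comp (C ξ * X) - 1)) hξ1 fun n => by
      rw [coeff_neg, norm_neg]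
      exact norm_coeff_comp_C_mul_X_sub_one_le (norm_coeff_binomialQuotient_le p)
        (coeff_zero_binomialQuotient hp) hξ1.le n
  have htP : t ^ (p - 1) = (binomialQuotient K p).eval (ξ * t) := by
    simpa [eval_comp, sub_eq_zero] using ht
  have ht0 : t ≠ 0 := by
    rintro rfl
    simp at ht1
  have hpow (z : K) : z ^ p = z ^ (p - 1) * z := by rw [← pow_succ, Nat.sub_add_cancel hp.one_le]
  refine ⟨1 + ξ * t, ?_, ?_⟩
  · rw [one_add_pow_eq_of_prime hp, ← htP, hpow (ξ * t), mul_pow, hξ]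
    ring
  · simpa using mul_ne_zero hξ0 ht0

end PrimeRoots

theorem stmt0_general (p : ℕ) [Fact p.Prime]
    (K : Type*) [NormedField K] [NormedAlgebra ℚ_[p] K] [FiniteDimensional ℚ_[p] K]
    (hiso : ∀ x : ℚ_[p], ‖algebraMap ℚ_[p] K x‖ = ‖x‖)
    (V : Subring K) (hV : ∀ x : K, x ∈ V ↔ ‖x‖ ≤ 1) :
    (∃ ζ ∈ V, ζ ^ p = 1 ∧ ζ ≠ 1) ↔ (∃ ξ ∈ V, ξ ^ (p - 1) = -(p : K)) := by
  have hp : p.Prime := Fact.out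
  have : IsUltrametricDist K :=
    isUltrametricDist_of_forall_norm_natCast_le_one fun n => (hV _).1 (natCast_mem V n)
  have : CompleteSpace K := FiniteDimensional.complete ℚ_[p] K
  have hpK : ‖(p : K)‖ = (p : ℝ)⁻¹ := by
    rw [← map_natCast (algebraMap ℚ_[p] K), hiso, Padic.norm_p]
  have hpK1 : ‖(p : K)‖ < 1 := hpK ▸ inv_lt_one_of_one_lt₀ (by exact_mod_cast hp.one_lt)
  have hpK0 : (p : K) ≠ 0 := norm_ne_zero_iff.1 (hpK ▸ inv_ne_zero (mod_cast hp.ne_zero))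
  constructor
  · rintro ⟨ζ, -, hζ, hζ1⟩
    obtain ⟨ξ, hξ1, hξ⟩ := exists_pow_pred_eq_neg_of_pow_eq_one hp hpK1 hζ hζ1
    exact ⟨ξ, (hV ξ).2 hξ1.le, hξ⟩
  · rintro ⟨ξ, -, hξ⟩
    obtain ⟨ζ, hζ, hζ1⟩ := exists_pow_eq_one_of_pow_pred_eq_neg hp hpK1 hpK0 hξ
    exact ⟨ζ, (hV ζ).2 (norm_eq_one_of_pow_eq_one hζ hp.ne_zero).le, hζ, hζ1⟩

/-- Let `p` be an odd prime and `V` the ring of integers of a finite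
extension `K` of `ℚ_p` (the subring of elements of norm at most 1, for the extended
absolute value).  Then `V` contains a primitive `p`-th root of unity if and only if
`V` contains a `(p-1)`-th root of `-p`. -/
theorem stmt0 (p : ℕ) [Fact p.Prime] (hodd : Odd p)
    (K : Type*) [NormedField K] [NormedAlgebra ℚ_[p] K] [FiniteDimensional ℚ_[p] K]
    (hiso : ∀ x : ℚ_[p], ‖algebraMap ℚ_[p] K x‖ = ‖x‖)
    (V : Subring K) (hV : ∀ x : K, x ∈ V ↔ ‖x‖ ≤ 1) :
    (∃ ζ ∈ V, ζ ^ p = 1 ∧ ζ ≠ 1) ↔ (∃ ξ ∈ V, ξ ^ (p - 1) = -(p : K)) :=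
  stmt0_general p K hiso V hV
end

section
/- Every continuous group homomorphism χ: Z_p^* → C_p^* taking values in a complete subfield satisfies: there exists r ≥ 0 such that the map x ↦ χ(1 + p^{r+1} x) from Z_p to C_p^* is given by x ↦ exp(s·log(1 + p^{r+1}x)) for some s ∈ C_p, i.e. χ is locally analytic. -/
/-!
Restricted to `1 + p^(m+2) ℤ_p = exp (p^(m+2) ℤ_p)`, the character `χ` becomes the continuous
additive character `ψ z = χ (exp (p^(m+2) z))` of `ℤ_p`, and by uniform continuity `ψ 1` is as
close to `1` as we like once `m` is large. Then `ψ 1 = exp c` with `c = log (ψ 1)`, and `ψ` agrees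
with `z ↦ exp (z c)` on the dense subset `ℕ ⊆ ℤ_p`, hence everywhere. Writing `u = exp (log u)` with
`log u ∈ p^(m+2) ℤ_p` then gives `χ u = exp (s log u)` for `s = c / p^(m+2)`.

Everything about `exp` and `log` happens on the disc `‖t‖ < p⁻¹` of a complete normed field over
`ℚ_p`, where `v_p(n!) < n` and `n + 1 ≤ pⁿ` make every term of both series dominated by `‖t‖`.
-/

open NormedSpace

/-- The `p`-adic logarithm series: `plog1p z = log (1 + z) = ∑ (-1)ⁿ zⁿ⁺¹/(n+1)`. -/
noncomputable def plog1p {K : Type*} [NormedField K] [CompleteSpace K] (z : K) : K :=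
  ∑' n : ℕ, (-1 : K) ^ n * z ^ (n + 1) / (n + 1)

open FormalMultilinearSeries Filter Topology
open scoped Nat NNReal ENNReal

-- `logCoeff 0 = 0` because `x / 0 = 0`: the series of `log (1 + x)` has no constant term.
def logCoeff (n : ℕ) : ℚ := (-1) ^ (n + 1) / n

noncomputable def logSeries (𝕜 : Type*) [NontriviallyNormedField 𝕜] :
    FormalMultilinearSeries 𝕜 𝕜 𝕜 :=
  ofScalars 𝕜 fun n => (logCoeff n : 𝕜)

theorem logCoeff_zero : logCoeff 0 = 0 := by simp [logCoeff]

theorem logCoeff_succ (n : ℕ) : logCoeff (n + 1) = (-1) ^ n / (n + 1) := by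
  simp [logCoeff, pow_succ]

section Coefficients

variable {𝕜 : Type*} [NontriviallyNormedField 𝕜]

theorem coeff_ofScalars_comp_ofScalars [CharZero 𝕜] (a b : ℕ → ℚ) (n : ℕ) :
    ((ofScalars 𝕜 fun k => (a k : 𝕜)).comp (ofScalars 𝕜 fun k => (b k : 𝕜))).coeff n =
      ((∑ c : Composition n, a c.length * ∏ i, b (c.blocksFun i) : ℚ) : 𝕜) := by
  simp only [coeff, FormalMultilinearSeries.comp, sum_apply]
  push_cast
  refine Finset.sum_congr rfl fun c _ => ?_
  rw [compAlongComposition_apply, apply_eq_prod_smul_coeff, smul_eq_mul, coeff_ofScalars,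
    mul_comm]
  simp [applyComposition, apply_eq_prod_smul_coeff]

theorem expSeries_eq_ofScalars_ratCast [CharZero 𝕜] :
    expSeries 𝕜 𝕜 = ofScalars 𝕜 fun n => (((n ! : ℚ)⁻¹ : ℚ) : 𝕜) := by
  simp [expSeries_eq_ofScalars]

theorem hasFPowerSeriesOnBall_one_add :
    HasFPowerSeriesOnBall (fun x : 𝕜 => 1 + x) (ofScalars 𝕜 fun n => if n ≤ 1 then (1 : 𝕜) else 0)
      0 ∞ where
  r_le := by
    refine (radius_eq_top_of_eventually_eq_zero _ ?_).ge
    filter_upwards [eventually_gt_atTop 1] with n hn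
    exact ofScalars_eq_zero_of_scalar_zero _ (if_neg hn.not_ge)
  r_pos := ENNReal.zero_lt_top
  hasSum {y} _ := by
    rw [zero_add, ofScalars_apply_eq']
    have hsupp : ∀ n ∉ Finset.range 2, (if n ≤ 1 then (1 : 𝕜) else 0) • y ^ n = 0 := by
      intro n hn
      simp [show ¬ n ≤ 1 by simpa using hn]
    simpa [Finset.sum_range_succ] using hasSum_sum_of_ne_finset_zero hsupp

end Coefficients

theorem hasFPowerSeriesOnBall_log_one_add :
    HasFPowerSeriesOnBall (fun x : ℝ => Real.log (1 + x)) (logSeries ℝ) 0 1 where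
  r_le := by
    refine le_radius_of_bound _ 1 fun n => ?_
    rw [logSeries, ofScalars_norm, NNReal.coe_one, one_pow, mul_one, Real.norm_eq_abs]
    rcases n with _ | n
    · simp [logCoeff_zero]
    · rw [logCoeff_succ, Rat.cast_div, abs_div]
      push_cast
      rw [abs_pow, abs_neg, abs_one, one_pow, abs_of_pos (by positivity)]
      exact div_le_one_of_le₀ (by linarith [n.cast_nonneg (α := ℝ)]) (by positivity)
  r_pos := by simp
  hasSum {y} hy := by
    rw [← ENNReal.coe_one, Metric.eball_coe, mem_ball_zero_iff, Real.norm_eq_abs] at hy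
    rw [zero_add, logSeries, ofScalars_apply_eq']
    refine (hasSum_nat_add_iff' 1).mp ?_
    convert (Real.hasSum_pow_div_log_of_abs_lt_one (x := -y) (by rwa [abs_neg])).neg using 1
    · ext n
      rw [logCoeff_succ, neg_pow]
      push_cast
      ring
    · simp [logCoeff_zero]

-- Both sides are rational numbers, so they may be compared in `ℝ`, where the power series
-- of `exp (log (1 + x))` and of `1 + x` at `0` coincide.
theorem sum_compositions_logCoeff (n : ℕ) :
    (∑ c : Composition n, ((c.length ! : ℚ)⁻¹) * ∏ i, logCoeff (c.blocksFun i)) =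
      if n ≤ 1 then 1 else 0 := by
  have hcomp : HasFPowerSeriesAt (fun x : ℝ => 1 + x) ((expSeries ℝ ℝ).comp (logSeries ℝ)) 0 := by
    have hexp : HasFPowerSeriesAt Real.exp (expSeries ℝ ℝ) (Real.log (1 + 0)) := by
      rw [add_zero, Real.log_one, Real.exp_eq_exp_ℝ]
      exact exp_hasFPowerSeriesAt_zero
    refine (hexp.comp (f := fun x : ℝ => Real.log (1 + x))
      hasFPowerSeriesOnBall_log_one_add.hasFPowerSeriesAt).congr ?_
    filter_upwards [Metric.ball_mem_nhds (0 : ℝ) one_pos] with x hx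
    have hx : |x| < 1 := by simpa using hx
    exact Real.exp_log (by linarith [neg_abs_le x])
  have h := congrArg (coeff · n)
    (hcomp.eq_formalMultilinearSeries (hasFPowerSeriesOnBall_one_add (𝕜 := ℝ)).hasFPowerSeriesAt)
  rw [expSeries_eq_ofScalars_ratCast, logSeries, coeff_ofScalars_comp_ofScalars,
    coeff_ofScalars] at h
  split_ifs at h ⊢ <;> exact_mod_cast h

theorem expSeries_comp_logSeries {𝕜 : Type*} [NontriviallyNormedField 𝕜] [CharZero 𝕜] :
    (expSeries 𝕜 𝕜).comp (logSeries 𝕜) = ofScalars 𝕜 fun n => if n ≤ 1 then (1 : 𝕜) else 0 := by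
  refine FormalMultilinearSeries.ext fun n => ?_
  rw [← mkPiRing_coeff_eq ((expSeries 𝕜 𝕜).comp _), ← mkPiRing_coeff_eq (ofScalars 𝕜 _),
    expSeries_eq_ofScalars_ratCast, logSeries, coeff_ofScalars_comp_ofScalars,
    sum_compositions_logCoeff, coeff_ofScalars]
  split_ifs <;> simp

section PadicNorms

variable (p : ℕ) [Fact p.Prime] {𝕜 : Type*} [NontriviallyNormedField 𝕜]

theorem norm_inv_natCast_eq [NormedAlgebra ℚ_[p] 𝕜] {n : ℕ} (hn : n ≠ 0) :
    ‖(n : 𝕜)⁻¹‖ = (p : ℝ) ^ padicValNat p n := by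
  rw [← map_natCast (algebraMap ℚ_[p] 𝕜), ← map_inv₀, norm_algebraMap', norm_inv,
    Padic.norm_eq_zpow_neg_valuation (by exact_mod_cast hn), Padic.valuation_natCast, zpow_neg,
    inv_inv, zpow_natCast]

theorem norm_inv_natCast_le [NormedAlgebra ℚ_[p] 𝕜] (n : ℕ) : ‖(n : 𝕜)⁻¹‖ ≤ n := by
  rcases eq_or_ne n 0 with rfl | hn
  · simp
  rw [norm_inv_natCast_eq p hn]
  exact_mod_cast Nat.le_of_dvd (Nat.pos_of_ne_zero hn) pow_padicValNat_dvd

theorem norm_inv_factorial_succ_le [NormedAlgebra ℚ_[p] 𝕜] (n : ℕ) :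
    ‖((n + 1)! : 𝕜)⁻¹‖ ≤ (p : ℝ) ^ n := by
  rw [norm_inv_natCast_eq p (Nat.factorial_ne_zero _)]
  exact pow_le_pow_right₀ (by exact_mod_cast (Fact.out : p.Prime).one_le)
    (Nat.lt_succ_iff.mp (padicValNat_factorial_lt_of_ne_zero p n.succ_ne_zero))

theorem norm_plog1p_term_le [NormedAlgebra ℚ_[p] 𝕜] (w : 𝕜) (n : ℕ) :
    ‖(-1) ^ n * w ^ (n + 1) / (n + 1)‖ ≤ (n + 1) * ‖w‖ ^ (n + 1) := by
  rw [norm_div, norm_mul, norm_pow, norm_neg, norm_one, one_pow, one_mul, norm_pow, div_eq_mul_inv,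
    ← norm_inv, mul_comm]
  gcongr
  exact_mod_cast norm_inv_natCast_le p (n + 1)

end PadicNorms

theorem natCast_prime_ne_zero (p : ℕ) [Fact p.Prime] : (p : ℝ) ≠ 0 :=
  Nat.cast_ne_zero.2 (Fact.out : p.Prime).ne_zero

theorem inv_natCast_prime_pos (p : ℕ) [Fact p.Prime] : (0 : ℝ) < (p : ℝ)⁻¹ :=
  inv_pos.2 (Nat.cast_pos.2 (Fact.out : p.Prime).pos)

theorem inv_natCast_prime_lt_one (p : ℕ) [Fact p.Prime] : (p : ℝ)⁻¹ < 1 :=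
  inv_lt_one_of_one_lt₀ (by exact_mod_cast (Fact.out : p.Prime).one_lt)

theorem tendsto_inv_natCast_prime_pow (p : ℕ) [Fact p.Prime] :
    Tendsto (fun m : ℕ => (p : ℝ)⁻¹ ^ m) atTop (𝓝 0) :=
  tendsto_pow_atTop_nhds_zero_of_lt_one (inv_natCast_prime_pos p).le (inv_natCast_prime_lt_one p)

theorem natCast_succ_mul_inv_pow_le_one {p : ℕ} (hp : 1 < p) (n : ℕ) :
    ((n : ℝ) + 1) * (p : ℝ)⁻¹ ^ n ≤ 1 := by
  rw [inv_pow, ← div_eq_mul_inv, div_le_one (pow_pos (Nat.cast_pos.2 (by omega)) n)]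
  exact_mod_cast Nat.lt_pow_self hp

section SmallArguments

variable {p : ℕ} [Fact p.Prime] {𝕜 : Type*} [NontriviallyNormedField 𝕜] [NormedAlgebra ℚ_[p] 𝕜]

theorem inv_le_radius_expSeries : (((p : ℝ≥0)⁻¹ : ℝ≥0) : ℝ≥0∞) ≤ (expSeries 𝕜 𝕜).radius := by
  refine le_radius_of_bound _ 1 fun n => ?_
  rw [expSeries_eq_ofScalars 𝕜 𝕜, ofScalars_norm, NNReal.coe_inv, NNReal.coe_natCast]
  rcases n with _ | n
  · simp
  calc ‖((n + 1)! : 𝕜)⁻¹‖ * (p : ℝ)⁻¹ ^ (n + 1) ≤ (p : ℝ) ^ n * (p : ℝ)⁻¹ ^ (n + 1) := by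
        gcongr
        exact norm_inv_factorial_succ_le p n
    _ = (p : ℝ)⁻¹ := by
        rw [pow_succ, ← mul_assoc, ← mul_pow, mul_inv_cancel₀ (natCast_prime_ne_zero p), one_pow,
          one_mul]
    _ ≤ 1 := (inv_natCast_prime_lt_one p).le

theorem mem_eball_expSeries_radius {t : 𝕜} (ht : ‖t‖ < (p : ℝ)⁻¹) :
    t ∈ Metric.eball 0 (expSeries 𝕜 𝕜).radius :=
  Metric.eball_subset_eball inv_le_radius_expSeries
    (by rwa [Metric.eball_coe, mem_ball_zero_iff, NNReal.coe_inv, NNReal.coe_natCast])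

theorem exp_add_of_norm_lt [CompleteSpace 𝕜] {a b : 𝕜} (ha : ‖a‖ < (p : ℝ)⁻¹)
    (hb : ‖b‖ < (p : ℝ)⁻¹) :
    exp (a + b) = exp a * exp b :=
  have : CharZero 𝕜 := charZero_of_injective_algebraMap (algebraMap ℚ_[p] 𝕜).injective
  exp_add_of_mem_ball (mem_eball_expSeries_radius ha) (mem_eball_expSeries_radius hb)

theorem norm_exp_sub_one_le [CompleteSpace 𝕜] {t : 𝕜} (ht : ‖t‖ < (p : ℝ)⁻¹) :
    ‖exp t - 1‖ ≤ ‖t‖ := by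
  have : IsUltrametricDist 𝕜 := IsUltrametricDist.of_normedAlgebra ℚ_[p]
  have : CharZero 𝕜 := charZero_of_injective_algebraMap (algebraMap ℚ_[p] 𝕜).injective
  have hs := (hasSum_nat_add_iff' 1).mpr (expSeries_hasSum_exp_of_mem_ball' t
    (mem_eball_expSeries_radius ht))
  rw [Finset.sum_range_one, Nat.factorial_zero, Nat.cast_one, inv_one, pow_zero, one_smul] at hs
  rw [← hs.tsum_eq]
  refine IsUltrametricDist.norm_tsum_le_of_forall_le_of_nonneg (norm_nonneg t) fun n => ?_
  have hpt : (p : ℝ) * ‖t‖ ≤ 1 := by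
    calc (p : ℝ) * ‖t‖ ≤ p * (p : ℝ)⁻¹ := by gcongr
      _ = 1 := mul_inv_cancel₀ (natCast_prime_ne_zero p)
  calc ‖((n + 1)! : 𝕜)⁻¹ • t ^ (n + 1)‖ ≤ (p : ℝ) ^ n * ‖t‖ ^ (n + 1) := by
        rw [norm_smul, norm_pow]
        gcongr
        exact norm_inv_factorial_succ_le p n
    _ = ((p : ℝ) * ‖t‖) ^ n * ‖t‖ := by ring
    _ ≤ ‖t‖ := mul_le_of_le_one_left (norm_nonneg t) (pow_le_one₀ (by positivity) hpt)

theorem norm_exp_eq_one [CompleteSpace 𝕜] {t : 𝕜} (ht : ‖t‖ < (p : ℝ)⁻¹) : ‖exp t‖ = 1 := by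
  have : IsUltrametricDist 𝕜 := IsUltrametricDist.of_normedAlgebra ℚ_[p]
  have hlt : ‖exp t - 1‖ < 1 :=
    (norm_exp_sub_one_le ht).trans_lt (ht.trans (inv_natCast_prime_lt_one p))
  have h := IsUltrametricDist.norm_add_eq_max_of_norm_ne_norm (x := exp t - 1) (y := 1)
    (by rw [norm_one]; exact hlt.ne)
  rwa [sub_add_cancel, norm_one, max_eq_right hlt.le] at h

end SmallArguments

section Logarithm

variable {𝕜 : Type*} [NontriviallyNormedField 𝕜] [CompleteSpace 𝕜]

theorem hasSum_plog1p (p : ℕ) [Fact p.Prime] [NormedAlgebra ℚ_[p] 𝕜] {w : 𝕜} (hw : ‖w‖ < 1) :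
    HasSum (fun n : ℕ => (-1) ^ n * w ^ (n + 1) / (n + 1)) (plog1p w) := by
  have hgeom : Summable fun n : ℕ => ((n : ℝ) + 1) * ‖w‖ ^ (n + 1) := by
    simpa using (summable_nat_add_iff 1).mpr
      (summable_pow_mul_geometric_of_norm_lt_one 1 (r := ‖w‖) (by simpa using hw))
  exact (hgeom.of_norm_bounded (norm_plog1p_term_le p w)).hasSum

theorem norm_plog1p_le {p : ℕ} [Fact p.Prime] [NormedAlgebra ℚ_[p] 𝕜] {w : 𝕜}
    (hw : ‖w‖ < (p : ℝ)⁻¹) : ‖plog1p w‖ ≤ ‖w‖ := by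
  have : IsUltrametricDist 𝕜 := IsUltrametricDist.of_normedAlgebra ℚ_[p]
  refine IsUltrametricDist.norm_tsum_le_of_forall_le_of_nonneg (norm_nonneg w) fun n => ?_
  calc _ ≤ ((n : ℝ) + 1) * ‖w‖ ^ (n + 1) := norm_plog1p_term_le p w n
    _ ≤ ((n : ℝ) + 1) * (p : ℝ)⁻¹ ^ n * ‖w‖ := by
        rw [pow_succ, ← mul_assoc]
        gcongr
    _ ≤ ‖w‖ := mul_le_of_le_one_left (norm_nonneg w)
        (natCast_succ_mul_inv_pow_le_one (Fact.out : p.Prime).one_lt n)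

theorem algebraMap_plog1p (p : ℕ) [Fact p.Prime] [NormedAlgebra ℚ_[p] 𝕜] {w : ℚ_[p]}
    (hw : ‖w‖ < 1) : plog1p (algebraMap ℚ_[p] 𝕜 w) = algebraMap ℚ_[p] 𝕜 (plog1p w) := by
  have hmap := (hasSum_plog1p p hw).map (algebraMap ℚ_[p] 𝕜)
    (algebraMap_isometry ℚ_[p] 𝕜).continuous
  refine (hasSum_plog1p p (by rwa [norm_algebraMap'])).unique ?_
  simpa [Function.comp_def] using hmap

theorem hasFPowerSeriesOnBall_plog1p (p : ℕ) [Fact p.Prime] [NormedAlgebra ℚ_[p] 𝕜] :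
    HasFPowerSeriesOnBall plog1p (logSeries 𝕜) 0 ((p : ℝ≥0)⁻¹ : ℝ≥0) := by
  have : CharZero 𝕜 := charZero_of_injective_algebraMap (algebraMap ℚ_[p] 𝕜).injective
  refine ⟨le_radius_of_bound _ 1 fun n => ?_, by simp, fun {y} hy => ?_⟩
  · rw [logSeries, ofScalars_norm, NNReal.coe_inv, NNReal.coe_natCast]
    refine le_trans ?_ (natCast_succ_mul_inv_pow_le_one (Fact.out : p.Prime).one_lt n)
    gcongr
    rw [logCoeff, Rat.cast_div, div_eq_mul_inv, norm_mul, Rat.cast_pow, norm_pow, Rat.cast_neg,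
      Rat.cast_one, norm_neg, norm_one, one_pow, one_mul, Rat.cast_natCast]
    linarith [norm_inv_natCast_le p (𝕜 := 𝕜) n]
  · rw [Metric.eball_coe, mem_ball_zero_iff, NNReal.coe_inv, NNReal.coe_natCast] at hy
    have hy1 : ‖y‖ < 1 := hy.trans (inv_natCast_prime_lt_one p)
    have hterm : (fun n : ℕ => (logCoeff (n + 1) : 𝕜) * y ^ (n + 1)) =
        fun n : ℕ => (-1) ^ n * y ^ (n + 1) / (n + 1) := by
      funext n
      rw [logCoeff_succ]
      push_cast
      ring
    rw [zero_add, logSeries, ofScalars_apply_eq']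
    refine (hasSum_nat_add_iff' 1).mp ?_
    simpa [logCoeff_zero, hterm] using hasSum_plog1p p hy1

theorem eventually_exp_plog1p_eq (p : ℕ) [Fact p.Prime] [NormedAlgebra ℚ_[p] 𝕜] :
    ∀ᶠ w in 𝓝 (0 : 𝕜), exp (plog1p w) = 1 + w := by
  have : CharZero 𝕜 := charZero_of_injective_algebraMap (algebraMap ℚ_[p] 𝕜).injective
  have hexp : HasFPowerSeriesAt exp (expSeries 𝕜 𝕜) (plog1p (0 : 𝕜)) := by
    rw [show plog1p (0 : 𝕜) = 0 by simp [plog1p]]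
    exact hasFPowerSeriesAt_exp_zero_of_radius_pos
      ((ENNReal.coe_pos.2 (by simp [(Fact.out : p.Prime).pos] : (0 : ℝ≥0) < (p : ℝ≥0)⁻¹)).trans_le
        inv_le_radius_expSeries)
  have hcomp := hexp.comp (hasFPowerSeriesOnBall_plog1p p).hasFPowerSeriesAt
  rw [expSeries_comp_logSeries] at hcomp
  filter_upwards [hcomp.eventually_hasSum,
    hasFPowerSeriesOnBall_one_add.hasFPowerSeriesAt.eventually_hasSum] with w h₁ h₂
  simpa using h₁.unique h₂

end Logarithm

section Characters

variable {p : ℕ} [Fact p.Prime] {𝕜 : Type*} [NontriviallyNormedField 𝕜] [NormedAlgebra ℚ_[p] 𝕜]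

theorem norm_padicInt_smul_le (z : ℤ_[p]) (c : 𝕜) : ‖(z : ℚ_[p]) • c‖ ≤ ‖c‖ := by
  rw [norm_smul, PadicInt.padic_norm_e_of_padicInt]
  exact mul_le_of_le_one_left (norm_nonneg c) z.norm_le_one

noncomputable def expAddChar [CompleteSpace 𝕜] (c : 𝕜) (hc : ‖c‖ < (p : ℝ)⁻¹) :
    AddChar ℤ_[p] 𝕜 where
  toFun z := exp ((z : ℚ_[p]) • c)
  map_zero_eq_one' := by simp
  map_add_eq_mul' a b := by
    rw [PadicInt.coe_add, add_smul, exp_add_of_norm_lt ((norm_padicInt_smul_le a c).trans_lt hc)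
      ((norm_padicInt_smul_le b c).trans_lt hc)]

theorem expAddChar_apply [CompleteSpace 𝕜] {c : 𝕜} (hc : ‖c‖ < (p : ℝ)⁻¹) (z : ℤ_[p]) :
    expAddChar c hc z = exp ((z : ℚ_[p]) • c) :=
  rfl

theorem continuous_expAddChar [CompleteSpace 𝕜] {c : 𝕜} (hc : ‖c‖ < (p : ℝ)⁻¹) :
    Continuous (expAddChar c hc) := by
  have : CharZero 𝕜 := charZero_of_injective_algebraMap (algebraMap ℚ_[p] 𝕜).injective
  exact (continuousOn_exp (𝕂 := 𝕜)).comp_continuous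
    (continuous_subtype_val.smul continuous_const)
    fun z => mem_eball_expSeries_radius ((norm_padicInt_smul_le z c).trans_lt hc)

end Characters

theorem Padic.norm_prime_sq_lt (p : ℕ) [Fact p.Prime] : ‖(p : ℚ_[p]) ^ 2‖ < (p : ℝ)⁻¹ := by
  rw [norm_pow, Padic.norm_p, sq]
  exact mul_lt_of_lt_one_left (inv_natCast_prime_pos p) (inv_natCast_prime_lt_one p)

noncomputable def expUnit (p : ℕ) [Fact p.Prime] : AddChar ℤ_[p] ℤ_[p]ˣ where
  toFun z := PadicInt.mkUnits (norm_exp_eq_one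
    ((norm_padicInt_smul_le z _).trans_lt (Padic.norm_prime_sq_lt p)))
  map_zero_eq_one' :=
    Units.ext (PadicInt.ext (expAddChar _ (Padic.norm_prime_sq_lt p)).map_zero_eq_one)
  map_add_eq_mul' a b :=
    Units.ext (PadicInt.ext ((expAddChar _ (Padic.norm_prime_sq_lt p)).map_add_eq_mul a b))

theorem coe_expUnit (p : ℕ) [Fact p.Prime] (z : ℤ_[p]) :
    ((expUnit p z : ℤ_[p]) : ℚ_[p]) = exp ((z : ℚ_[p]) • (p : ℚ_[p]) ^ 2) :=
  rfl

theorem continuous_expUnit (p : ℕ) [Fact p.Prime] : Continuous (expUnit p) := by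
  have hval : Continuous fun z => (expUnit p z : ℤ_[p]) :=
    (continuous_expAddChar (Padic.norm_prime_sq_lt p)).subtype_mk _
  refine Units.continuous_iff.2 ⟨hval, ?_⟩
  simpa only [← AddChar.map_neg_eq_inv, Function.comp_def] using hval.comp continuous_neg

theorem PadicInt.norm_pow_mul_le (p : ℕ) [Fact p.Prime] (k : ℕ) (x : ℤ_[p]) :
    ‖(p : ℤ_[p]) ^ k * x‖ ≤ (p : ℝ)⁻¹ ^ k := by
  rw [norm_mul, norm_pow, PadicInt.norm_p]
  exact mul_le_of_le_one_right (pow_nonneg (inv_natCast_prime_pos p).le k) x.norm_le_one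

theorem PadicInt.tendstoUniformly_pow_mul (p : ℕ) [Fact p.Prime] :
    TendstoUniformly (fun (m : ℕ) (z : ℤ_[p]) => (p : ℤ_[p]) ^ m * z) (fun _ => 0) atTop := by
  refine Metric.tendstoUniformly_iff.2 fun ε hε => ?_
  filter_upwards [(tendsto_inv_natCast_prime_pow p).eventually (gt_mem_nhds hε)] with m hm z
  rw [dist_zero_left]
  exact (PadicInt.norm_pow_mul_le p m z).trans_lt hm

theorem PadicInt.exists_pow_mul_eq_of_norm_le {p : ℕ} [Fact p.Prime] {y : ℚ_[p]} (k : ℕ)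
    (hy : ‖y‖ ≤ (p : ℝ)⁻¹ ^ k) : ∃ z : ℤ_[p], (((p : ℤ_[p]) ^ k * z : ℤ_[p]) : ℚ_[p]) = y := by
  have hpk : (p : ℚ_[p]) ^ k ≠ 0 := pow_ne_zero k (Nat.cast_ne_zero.2 (Fact.out : p.Prime).ne_zero)
  refine ⟨(⟨y / (p : ℚ_[p]) ^ k, ?_⟩ : ℤ_[p]), mul_div_cancel₀ y hpk⟩
  rw [norm_div, norm_pow, Padic.norm_p]
  exact div_le_one_of_le₀ hy (pow_nonneg (inv_natCast_prime_pos p).le k)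

theorem eventually_exists_expUnit_pow_mul_eq (p : ℕ) [Fact p.Prime] :
    ∀ᶠ m in atTop, ∀ (x : ℤ_[p]) (u : ℤ_[p]ˣ), (u : ℤ_[p]) = 1 + (p : ℤ_[p]) ^ (m + 2) * x →
      ∃ z : ℤ_[p], expUnit p ((p : ℤ_[p]) ^ m * z) = u ∧
        (((p : ℤ_[p]) ^ (m + 2) * z : ℤ_[p]) : ℚ_[p]) =
          plog1p (((p : ℤ_[p]) ^ (m + 2) * x : ℤ_[p]) : ℚ_[p]) := by
  obtain ⟨ε, hε, hexp⟩ := Metric.eventually_nhds_iff.1 (eventually_exp_plog1p_eq p (𝕜 := ℚ_[p]))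
  filter_upwards [(tendsto_inv_natCast_prime_pow p).eventually (gt_mem_nhds hε)] with m hm x u hu
  set w : ℚ_[p] := (((p : ℤ_[p]) ^ (m + 2) * x : ℤ_[p]) : ℚ_[p]) with hw_def
  have hw : ‖w‖ ≤ (p : ℝ)⁻¹ ^ (m + 2) := by
    simpa only [w, PadicInt.padic_norm_e_of_padicInt] using PadicInt.norm_pow_mul_le p (m + 2) x
  have hw_small : ‖w‖ < (p : ℝ)⁻¹ := hw.trans_lt
    (pow_lt_self_of_lt_one₀ (inv_natCast_prime_pos p) (inv_natCast_prime_lt_one p) (by omega))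
  obtain ⟨z, hz⟩ :=
    PadicInt.exists_pow_mul_eq_of_norm_le (m + 2) ((norm_plog1p_le hw_small).trans hw)
  refine ⟨z, Units.ext (PadicInt.ext ?_), hz⟩
  have hexp_w : exp (plog1p w) = 1 + w := hexp <| by
    rw [dist_zero_right]
    exact hw.trans_lt ((pow_le_pow_of_le_one (inv_natCast_prime_pos p).le
      (inv_natCast_prime_lt_one p).le (by omega)).trans_lt hm)
  rw [coe_expUnit, hu, PadicInt.coe_add, PadicInt.coe_one, ← hw_def, ← hexp_w, ← hz]
  congr 1
  push_cast
  ring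

theorem eventually_exists_pow_mul_eq_expAddChar {p : ℕ} [Fact p.Prime] {𝕜 : Type*}
    [NontriviallyNormedField 𝕜] [NormedAlgebra ℚ_[p] 𝕜] [CompleteSpace 𝕜]
    {ψ : AddChar ℤ_[p] 𝕜} (hψ : Continuous ψ) :
    ∀ᶠ m in atTop, ∃ (c : 𝕜) (hc : ‖c‖ < (p : ℝ)⁻¹),
      ∀ z : ℤ_[p], ψ ((p : ℤ_[p]) ^ m * z) = expAddChar c hc z := by
  obtain ⟨ε, hε, hexp⟩ := Metric.eventually_nhds_iff.1 (eventually_exp_plog1p_eq p (𝕜 := 𝕜))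
  filter_upwards [Metric.tendstoUniformly_iff.1 ((CompactSpace.uniformContinuous_of_continuous
    hψ).comp_tendstoUniformly (PadicInt.tendstoUniformly_pow_mul p)) _
    (lt_min hε (inv_natCast_prime_pos p))] with m hm
  let ψm := ψ.compAddMonoidHom (AddMonoidHom.mulLeft ((p : ℤ_[p]) ^ m))
  have h1 : ‖ψm 1 - 1‖ < min ε (p : ℝ)⁻¹ := by
    simpa [ψm, dist_eq_norm, norm_sub_rev] using hm 1
  have hc : ‖plog1p (ψm 1 - 1)‖ < (p : ℝ)⁻¹ :=
    (norm_plog1p_le (h1.trans_le (min_le_right _ _))).trans_lt (h1.trans_le (min_le_right _ _))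
  have hψm : ψm = expAddChar _ hc := by
    refine PadicInt.denseRange_natCast.addChar_eq_of_eval_one_eq
      (hψ.comp (continuous_const_mul _)) (continuous_expAddChar hc) ?_
    rw [expAddChar_apply, PadicInt.coe_one, one_smul,
      hexp (by simpa using h1.trans_le (min_le_left _ _)), add_sub_cancel]
  exact ⟨_, hc, fun z => DFunLike.congr_fun hψm z⟩

theorem stmt5_general (p : ℕ) [Fact p.Prime] (K : Type*) [NormedField K] [CompleteSpace K]
    [NormedAlgebra ℚ_[p] K]
    (χ : ℤ_[p]ˣ →* Kˣ) (hχ : Continuous fun u : ℤ_[p]ˣ => (χ u : K)) :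
    ∃ (r : ℕ) (s : K), ∀ (x : ℤ_[p]) (u : ℤ_[p]ˣ),
      (u : ℤ_[p]) = 1 + (p : ℤ_[p]) ^ (r + 1) * x →
      (χ u : K) =
        exp (s * plog1p (algebraMap ℚ_[p] K
          ((((p : ℤ_[p]) ^ (r + 1) * x : ℤ_[p]) : ℚ_[p])))) := by
  -- The power-series API needs a nontrivially normed field; in `K`, `‖p‖ = p⁻¹ ≠ 1`.
  let _ : NontriviallyNormedField K := .ofNormNeOne ⟨algebraMap ℚ_[p] K p,
    (map_ne_zero _).2 (Nat.cast_ne_zero.2 (Fact.out : p.Prime).ne_zero),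
    by rw [norm_algebraMap', Padic.norm_p]; exact (inv_natCast_prime_lt_one p).ne⟩
  let ψ : AddChar ℤ_[p] K := (Units.coeHom K).compAddChar (χ.compAddChar (expUnit p))
  obtain ⟨m, ⟨c, hc, hψ⟩, hlog⟩ :=
    ((eventually_exists_pow_mul_eq_expAddChar (ψ := ψ) (hχ.comp (continuous_expUnit p))).and
      (eventually_exists_expUnit_pow_mul_eq p)).exists
  refine ⟨m + 1, c / algebraMap ℚ_[p] K ((p : ℚ_[p]) ^ (m + 2)), fun x u hu => ?_⟩
  obtain ⟨z, rfl, hz⟩ := hlog x u hu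
  have hw : ‖(((p : ℤ_[p]) ^ (m + 2) * x : ℤ_[p]) : ℚ_[p])‖ < 1 := by
    rw [PadicInt.padic_norm_e_of_padicInt]
    exact (PadicInt.norm_pow_mul_le p _ x).trans_lt
      (pow_lt_one₀ (inv_natCast_prime_pos p).le (inv_natCast_prime_lt_one p) (by omega))
  have hpK : algebraMap ℚ_[p] K ((p : ℚ_[p]) ^ (m + 2)) ≠ 0 :=
    (map_ne_zero _).2 (pow_ne_zero _ (Nat.cast_ne_zero.2 (Fact.out : p.Prime).ne_zero))
  rw [show (χ (expUnit p ((p : ℤ_[p]) ^ m * z)) : K) = ψ ((p : ℤ_[p]) ^ m * z) from rfl, hψ,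
    expAddChar_apply, algebraMap_plog1p p hw, ← hz, Algebra.smul_def, PadicInt.coe_mul,
    PadicInt.coe_pow, PadicInt.coe_natCast, map_mul]
  field_simp

/-- Every continuous character `χ : ℤ_pˣ → Kˣ` (with `K` a finite extension
of `ℚ_p`) is locally analytic: there are `r ≥ 0` and `s ∈ K` such that for every
`x ∈ ℤ_p`, `χ (1 + p^(r+1) x) = exp (s · log (1 + p^(r+1) x))`. -/
theorem stmt5 (p : ℕ) [Fact p.Prime] (K : Type*) [NormedField K] [CompleteSpace K]
    [NormedAlgebra ℚ_[p] K] [FiniteDimensional ℚ_[p] K]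
    (χ : ℤ_[p]ˣ →* Kˣ) (hχ : Continuous fun u : ℤ_[p]ˣ => (χ u : K)) :
    ∃ (r : ℕ) (s : K), ∀ (x : ℤ_[p]) (u : ℤ_[p]ˣ),
      (u : ℤ_[p]) = 1 + (p : ℤ_[p]) ^ (r + 1) * x →
      (χ u : K) =
        exp (s * plog1p (algebraMap ℚ_[p] K
          ((((p : ℤ_[p]) ^ (r + 1) * x : ℤ_[p]) : ℚ_[p])))) :=
  stmt5_general p K χ hχ
end
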